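/- arXiv:2106.00790 — 3 statements merged into one kernel-verified Lean document; each statement's English description precedes it below -/
import Mathlib

section
/- For the classification of D-dimensional L2 balls with R = 1 and zero margin, the capacity satisfies α_B(0, 1, D) = 2/(D+1). Precisely: ∫_0^∞ χ_D(t) [∫_{-t}^{t} ((t^2+t_0^2)/2 - t·t_0) φ(t_0) dt_0 + ∫_{-∞}^{-t} (t_0^2 + t^2) φ(t_0) dt_0] dt = (D+1)/2, where φ is the standard Gaussian density and χ_D is the Chi density with D degrees of freedom. -/
/-!
For every `t`, the bracket equals `(1 + t²)/2`: the cross term `t·t₀·φ(t₀)` is odd, so it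
integrates to zero over `[-t, t]`, and `g(t₀) = (t² + t₀²)·φ(t₀)` is even, so half its integral
over `[-t, t]` plus its integral over `(-∞, -t]` is half its integral over `ℝ`, namely
`(t² + 1)/2` (second moment of the standard Gaussian). Integrating `(1 + t²)/2` against the Chi
density, whose mass is `1` and whose second moment is `D`, gives `(D + 1)/2`.
-/

open MeasureTheory Real

/-- The standard Gaussian density. -/
noncomputable def stdGaussian (t : ℝ) : ℝ :=
  (Real.sqrt (2 * Real.pi))⁻¹ * Real.exp (-t ^ 2 / 2)

/-- The Chi density with `D` degrees of freedom. -/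
noncomputable def chiDensity (D : ℕ) (t : ℝ) : ℝ :=
  (2 : ℝ) ^ ((1 : ℝ) - (D : ℝ) / 2) / Real.Gamma ((D : ℝ) / 2) *
    t ^ (D - 1) * Real.exp (-t ^ 2 / 2)

open Set
open ProbabilityTheory hiding stdGaussian

lemma stdGaussian_eq_gaussianPDFReal : stdGaussian = gaussianPDFReal 0 1 := by
  ext x; simp [stdGaussian, gaussianPDFReal]

lemma stdGaussian_neg (x : ℝ) : stdGaussian (-x) = stdGaussian x := by
  simp [stdGaussian]

lemma integral_mul_stdGaussian (f : ℝ → ℝ) :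
    ∫ x, f x * stdGaussian x = ∫ x, f x ∂gaussianReal 0 1 := by
  simp_rw [integral_gaussianReal_eq_integral_smul one_ne_zero, stdGaussian_eq_gaussianPDFReal,
    smul_eq_mul, mul_comm]

lemma integrable_mul_stdGaussian_iff {f : ℝ → ℝ} :
    Integrable (fun x ↦ f x * stdGaussian x) ↔ Integrable f (gaussianReal 0 1) := by
  rw [gaussianReal_of_var_ne_zero 0 one_ne_zero,
    integrable_withDensity_iff_integrable_smul' (measurable_gaussianPDF 0 1)
      (ae_of_all _ fun _ ↦ gaussianPDF_lt_top)]
  simp_rw [toReal_gaussianPDF, stdGaussian_eq_gaussianPDFReal, smul_eq_mul, mul_comm]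

lemma integrable_stdGaussian : Integrable stdGaussian := by
  simpa using integrable_mul_stdGaussian_iff.2 (integrable_const (1 : ℝ))

lemma integral_stdGaussian : ∫ x, stdGaussian x = 1 := by
  simpa using integral_mul_stdGaussian fun _ ↦ 1

lemma integrable_sq_mul_stdGaussian : Integrable fun x ↦ x ^ 2 * stdGaussian x :=
  integrable_mul_stdGaussian_iff.2 (memLp_id_gaussianReal 2).integrable_sq

lemma integral_sq_mul_stdGaussian : ∫ x, x ^ 2 * stdGaussian x = 1 := by
  rw [integral_mul_stdGaussian, ← variance_of_integral_eq_zero (X := fun x ↦ x) aemeasurable_id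
    integral_id_gaussianReal, variance_fun_id_gaussianReal, NNReal.coe_one]

lemma intervalIntegral_neg_self_eq_zero_of_odd {f : ℝ → ℝ} (hf : Function.Odd f) (t : ℝ) :
    ∫ x in -t..t, f x = 0 := by
  have h := intervalIntegral.integral_comp_neg (a := -t) (b := t) f
  simp only [hf.eq, intervalIntegral.integral_neg, neg_neg] at h
  linarith

lemma intervalIntegral_neg_self_add_two_mul_integral_Iic_of_even {g : ℝ → ℝ}
    (hg : Function.Even g) (hint : Integrable g) (t : ℝ) :
    (∫ x in -t..t, g x) + 2 * ∫ x in Iic (-t), g x = ∫ x, g x := by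
  have hmid := intervalIntegral.integral_Iic_sub_Iic (a := -t) (b := t)
    hint.integrableOn hint.integrableOn
  have hsplit := intervalIntegral.integral_Iic_add_Ioi (b := t) hint.integrableOn hint.integrableOn
  have hrefl : ∫ x in Ioi t, g x = ∫ x in Iic (-t), g x := by
    simpa only [hg.eq] using integral_comp_neg_Ioi t g
  linarith

lemma ball_capacity_inner_integral (t : ℝ) :
    (∫ t0 in (-t)..t, ((t ^ 2 + t0 ^ 2) / 2 - t * t0) * stdGaussian t0) +
      ∫ t0 in Iic (-t), (t0 ^ 2 + t ^ 2) * stdGaussian t0 = (1 + t ^ 2) / 2 := by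
  set g : ℝ → ℝ := fun x ↦ (t ^ 2 + x ^ 2) * stdGaussian x
  have hg_even : Function.Even g := fun x ↦ by simp [g, stdGaussian_neg]
  have hg_int : Integrable g := by
    simpa only [g, add_mul] using
      (integrable_stdGaussian.const_mul (t ^ 2)).fun_add integrable_sq_mul_stdGaussian
  have hg_total : ∫ x, g x = t ^ 2 + 1 := by
    simp only [g, add_mul]
    rw [integral_add (integrable_stdGaussian.const_mul _) integrable_sq_mul_stdGaussian,
      integral_const_mul, integral_stdGaussian, integral_sq_mul_stdGaussian, mul_one]
  have h_odd : Function.Odd fun x ↦ x * stdGaussian x := fun x ↦ by simp [stdGaussian_neg]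
  have h_mid : ∫ t0 in (-t)..t, ((t ^ 2 + t0 ^ 2) / 2 - t * t0) * stdGaussian t0 =
      (∫ x in -t..t, g x) / 2 := by
    have hcont : Continuous fun x ↦ x * stdGaussian x := by unfold stdGaussian; fun_prop
    simp_rw [show ∀ x, ((t ^ 2 + x ^ 2) / 2 - t * x) * stdGaussian x =
      g x / 2 - t * (x * stdGaussian x) from fun x ↦ by ring]
    rw [intervalIntegral.integral_sub (hg_int.intervalIntegrable.div_const _)
      ((hcont.intervalIntegrable _ _).const_mul _), intervalIntegral.integral_div,
      intervalIntegral.integral_const_mul, intervalIntegral_neg_self_eq_zero_of_odd h_odd, mul_zero,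
      sub_zero]
  have h_tail : ∫ t0 in Iic (-t), (t0 ^ 2 + t ^ 2) * stdGaussian t0 = ∫ x in Iic (-t), g x := by
    simp only [g, add_comm]
  have := intervalIntegral_neg_self_add_two_mul_integral_Iic_of_even hg_even hg_int t
  rw [h_mid, h_tail]
  linarith

lemma integrableOn_Ioi_rpow_mul_exp_neg_sq_div_two {q : ℝ} (hq : -1 < q) :
    IntegrableOn (fun x ↦ x ^ q * exp (-x ^ 2 / 2)) (Ioi 0) := by
  simpa only [neg_div, neg_mul, one_div, ← div_eq_inv_mul] using
    integrableOn_rpow_mul_exp_neg_mul_sq (b := 1 / 2) (by norm_num) hq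

lemma integral_Ioi_rpow_mul_exp_neg_sq_div_two {q : ℝ} (hq : -1 < q) :
    ∫ x in Ioi 0, x ^ q * exp (-x ^ 2 / 2) = 2 ^ ((q - 1) / 2) * Gamma ((q + 1) / 2) := by
  have h := integral_rpow_mul_exp_neg_mul_rpow (p := 2) (b := 1 / 2) two_pos hq (by norm_num)
  simp only [rpow_two, neg_div, neg_mul, one_div, ← div_eq_inv_mul] at h
  simp_rw [neg_div]
  rw [h, inv_rpow zero_le_two, ← rpow_neg zero_le_two, neg_neg, ← rpow_neg_one 2,
    ← rpow_add two_pos]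
  ring_nf

section chiDensity

variable {D : ℕ}

lemma pow_mul_chiDensity (hD : 1 ≤ D) (n : ℕ) (t : ℝ) :
    t ^ n * chiDensity D t = 2 ^ (1 - (D : ℝ) / 2) / Gamma ((D : ℝ) / 2) *
      (t ^ ((n + D - 1 : ℕ) : ℝ) * exp (-t ^ 2 / 2)) := by
  rw [rpow_natCast, chiDensity, show n + D - 1 = n + (D - 1) by omega, pow_add]
  ring

lemma integrableOn_pow_mul_chiDensity (hD : 1 ≤ D) (n : ℕ) :
    IntegrableOn (fun t ↦ t ^ n * chiDensity D t) (Ioi 0) := by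
  simp_rw [pow_mul_chiDensity hD]
  exact (integrableOn_Ioi_rpow_mul_exp_neg_sq_div_two
    (neg_one_lt_zero.trans_le (Nat.cast_nonneg _))).const_mul _

lemma integral_pow_mul_chiDensity (hD : 1 ≤ D) (n : ℕ) :
    ∫ t in Ioi 0, t ^ n * chiDensity D t =
      2 ^ ((n : ℝ) / 2) * Gamma ((D + n : ℝ) / 2) / Gamma ((D : ℝ) / 2) := by
  simp_rw [pow_mul_chiDensity hD]
  rw [integral_const_mul, integral_Ioi_rpow_mul_exp_neg_sq_div_two
    (neg_one_lt_zero.trans_le (Nat.cast_nonneg _)),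
    Nat.cast_sub (by omega), Nat.cast_add, Nat.cast_one]
  have hpow : (2 : ℝ) ^ (1 - (D : ℝ) / 2) * 2 ^ (((n : ℝ) + D - 1 - 1) / 2) =
      2 ^ ((n : ℝ) / 2) := by
    rw [← rpow_add two_pos]
    ring_nf
  rw [show ((n : ℝ) + D - 1 + 1) / 2 = (D + n) / 2 by ring, ← hpow]
  ring

lemma integral_chiDensity (hD : 1 ≤ D) : ∫ t in Ioi 0, chiDensity D t = 1 := by
  have hΓ : Gamma ((D : ℝ) / 2) ≠ 0 := (Gamma_pos_of_pos (by positivity)).ne'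
  simpa [hΓ] using integral_pow_mul_chiDensity hD 0

lemma integral_sq_mul_chiDensity (hD : 1 ≤ D) : ∫ t in Ioi 0, t ^ 2 * chiDensity D t = D := by
  have hD' : (D : ℝ) / 2 ≠ 0 := by positivity
  rw [integral_pow_mul_chiDensity hD, add_div, Nat.cast_ofNat, div_self two_ne_zero,
    Gamma_add_one hD', rpow_one]
  field_simp

end chiDensity

/-- Capacity of `D`-dimensional `L₂` balls at `R = 1`, `κ = 0`:
`α_B(0,1,D)⁻¹ = (D+1)/2`. -/
theorem ball_capacity_R_one (D : ℕ) (hD : 1 ≤ D) :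
    ∫ t in Set.Ioi (0 : ℝ), chiDensity D t *
      ((∫ t0 in (-t)..t, ((t ^ 2 + t0 ^ 2) / 2 - t * t0) * stdGaussian t0) +
        ∫ t0 in Set.Iic (-t), (t0 ^ 2 + t ^ 2) * stdGaussian t0) = ((D : ℝ) + 1) / 2 := by
  simp_rw [ball_capacity_inner_integral]
  have h0 := integrableOn_pow_mul_chiDensity hD 0
  have h2 := integrableOn_pow_mul_chiDensity hD 2
  simp only [pow_zero, one_mul] at h0
  calc ∫ t in Ioi 0, chiDensity D t * ((1 + t ^ 2) / 2)
      = ((∫ t in Ioi 0, chiDensity D t) + ∫ t in Ioi 0, t ^ 2 * chiDensity D t) / 2 := by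
        rw [← integral_add h0 h2, ← integral_div]
        congr 1 with t
        ring
    _ = ((D : ℝ) + 1) / 2 := by
        rw [integral_chiDensity hD, integral_sq_mul_chiDensity hD, add_comm]
end

section
/- In the setting of the M4 hard-margin algorithm: let w^{(k)} be the optimal (minimum-norm) solution for a finite training set T_k, let x_{k+1} with label y be a point with y⟨w^{(k)}, x_{k+1}⟩ = 1 − δ_k where δ_k > 0 and ‖x_{k+1}‖ ≤ L, and let w^{(k+1)} be the minimum-norm solution for T_{k+1} = T_k ∪ {(x_{k+1}, y)}. Then ‖w^{(k+1)}‖² ≥ ‖w^{(k)}‖² + δ_k²/L². -/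
open scoped RealInnerProductSpace

/-!
The feasible set of a hard-margin problem is an intersection of half-spaces, hence convex, so
the minimum-norm point `wk` of the smaller problem satisfies the variational inequality
`⟪wk1 - wk, wk⟫ ≥ 0` against the feasible point `wk1`; this is Pythagoras with an inequality,
`‖wk1‖² ≥ ‖wk‖² + ‖wk1 - wk‖²`. The new constraint forces `⟪wk1 - wk, yn • xn⟫ ≥ δk`, and
Cauchy–Schwarz turns this into `‖wk1 - wk‖ ≥ δk / L`.
-/

section

variable {E : Type*} [NormedAddCommGroup E] [InnerProductSpace ℝ E]

def hardMarginFeasible {ι : Type*} (x : ι → E) (y : ι → ℝ) : Set E :=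
  {v | ∀ i, 1 ≤ y i * ⟪v, x i⟫}

theorem convex_hardMarginFeasible {ι : Type*} (x : ι → E) (y : ι → ℝ) :
    Convex ℝ (hardMarginFeasible x y) := by
  rw [hardMarginFeasible, Set.ofPred_forall]
  refine convex_iInter fun i => convex_halfSpace_ge (𝕜 := ℝ) (f := fun v => y i * ⟪v, x i⟫) ?_ 1
  constructor
  · intro u v
    simp only [inner_add_left]
    ring
  · intro c v
    simp only [real_inner_smul_left, smul_eq_mul]
    ring

theorem Convex.real_inner_sub_nonneg_of_forall_norm_le {K : Set E} (hK : Convex ℝ K)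
    {w v : E} (hw : w ∈ K) (hmin : ∀ u ∈ K, ‖w‖ ≤ ‖u‖) (hv : v ∈ K) :
    0 ≤ ⟪v - w, w⟫ := by
  -- `w` is the metric projection of `0` onto `K`.
  have : Nonempty K := ⟨⟨w, hw⟩⟩
  have hinf : ‖0 - w‖ = ⨅ u : K, ‖0 - (u : E)‖ := by
    simp only [zero_sub, norm_neg]
    exact le_antisymm (le_ciInf fun u => hmin u u.2)
      (ciInf_le (f := fun u : K => ‖(u : E)‖)
        ⟨0, Set.forall_mem_range.2 fun _ => norm_nonneg _⟩ ⟨w, hw⟩)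
  have h := (norm_eq_iInf_iff_real_inner_le_zero hK hw).1 hinf v hv
  rw [zero_sub, inner_neg_left, real_inner_comm] at h
  linarith

theorem norm_sq_add_norm_sub_sq_le_of_real_inner_nonneg {v w : E} (h : 0 ≤ ⟪v - w, w⟫) :
    ‖w‖ ^ 2 + ‖v - w‖ ^ 2 ≤ ‖v‖ ^ 2 := by
  have hexp := norm_add_sq_real w (v - w)
  rw [add_sub_cancel, real_inner_comm] at hexp
  linarith

theorem div_sq_le_norm_sq_of_le_real_inner {d z : E} {δ L : ℝ} (hδ : 0 ≤ δ) (hL : 0 < L)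
    (hz : ‖z‖ ≤ L) (h : δ ≤ ⟪d, z⟫) : δ ^ 2 / L ^ 2 ≤ ‖d‖ ^ 2 := by
  have hcs : δ ≤ ‖d‖ * L :=
    h.trans <| (real_inner_le_norm d z).trans <| mul_le_mul_of_nonneg_left hz (norm_nonneg d)
  rw [div_le_iff₀ (by positivity), ← mul_pow]
  exact pow_le_pow_left₀ hδ hcs 2

end

theorem m4_norm_increase_general {N : ℕ} {ι : Type*}
    (x : ι → EuclideanSpace ℝ (Fin N)) (y : ι → ℝ)
    (xn : EuclideanSpace ℝ (Fin N)) (yn : ℝ) (hyn : yn = 1 ∨ yn = -1)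
    (L δk : ℝ) (hL : 0 < L) (hδk : 0 < δk) (hxn : ‖xn‖ ≤ L)
    (wk wk1 : EuclideanSpace ℝ (Fin N))
    (hwk_feas : ∀ i, 1 ≤ y i * ⟪wk, x i⟫)
    (hwk_min : ∀ v : EuclideanSpace ℝ (Fin N), (∀ i, 1 ≤ y i * ⟪v, x i⟫) → ‖wk‖ ≤ ‖v‖)
    (hmargin : yn * ⟪wk, xn⟫ = 1 - δk)
    (hwk1_feas : (∀ i, 1 ≤ y i * ⟪wk1, x i⟫) ∧ 1 ≤ yn * ⟪wk1, xn⟫) :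
    ‖wk‖ ^ 2 + δk ^ 2 / L ^ 2 ≤ ‖wk1‖ ^ 2 := by
  have horth : 0 ≤ ⟪wk1 - wk, wk⟫ :=
    (convex_hardMarginFeasible x y).real_inner_sub_nonneg_of_forall_norm_le
      hwk_feas hwk_min hwk1_feas.1
  have hstep : δk ≤ ⟪wk1 - wk, yn • xn⟫ := by
    rw [real_inner_smul_right, inner_sub_left, mul_sub, hmargin]
    linarith [hwk1_feas.2]
  have hyn_xn : ‖yn • xn‖ ≤ L := by
    rcases hyn with rfl | rfl <;> simpa using hxn
  calc ‖wk‖ ^ 2 + δk ^ 2 / L ^ 2 ≤ ‖wk‖ ^ 2 + ‖wk1 - wk‖ ^ 2 := by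
        gcongr
        exact div_sq_le_norm_sq_of_le_real_inner hδk.le hL hyn_xn hstep
    _ ≤ ‖wk1‖ ^ 2 := norm_sq_add_norm_sub_sq_le_of_real_inner_nonneg horth

/-- M4 per-iteration norm increase: if `wk` is the minimum-norm solution for the finite
training set `T_k`, a new point `xn` with label `yn` has margin `1 - δk` (`δk > 0`,
`‖xn‖ ≤ L`), and `wk1` is the minimum-norm solution for `T_k ∪ {(xn, yn)}`, then
`‖wk1‖² ≥ ‖wk‖² + δk²/L²`. -/
theorem m4_norm_increase {N : ℕ} {ι : Type*} [Fintype ι]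
    (x : ι → EuclideanSpace ℝ (Fin N)) (y : ι → ℝ)
    (hy : ∀ i, y i = 1 ∨ y i = -1)
    (xn : EuclideanSpace ℝ (Fin N)) (yn : ℝ) (hyn : yn = 1 ∨ yn = -1)
    (L δk : ℝ) (hL : 0 < L) (hδk : 0 < δk) (hxn : ‖xn‖ ≤ L)
    (wk wk1 : EuclideanSpace ℝ (Fin N))
    (hwk_feas : ∀ i, 1 ≤ y i * ⟪wk, x i⟫)
    (hwk_min : ∀ v : EuclideanSpace ℝ (Fin N), (∀ i, 1 ≤ y i * ⟪v, x i⟫) → ‖wk‖ ≤ ‖v‖)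
    (hmargin : yn * ⟪wk, xn⟫ = 1 - δk)
    (hwk1_feas : (∀ i, 1 ≤ y i * ⟪wk1, x i⟫) ∧ 1 ≤ yn * ⟪wk1, xn⟫)
    (hwk1_min : ∀ v : EuclideanSpace ℝ (Fin N),
      (∀ i, 1 ≤ y i * ⟪v, x i⟫) → 1 ≤ yn * ⟪v, xn⟫ → ‖wk1‖ ≤ ‖v‖) :
    ‖wk‖ ^ 2 + δk ^ 2 / L ^ 2 ≤ ‖wk1‖ ^ 2 :=
  m4_norm_increase_general x y xn yn hyn L δk hL hδk hxn wk wk1 hwk_feas hwk_min hmargin hwk1_feas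
end

section
/- If the M4 algorithm with tolerance δ ∈ (0,1) terminates with solution w_{M4}, then the optimal value ‖w*‖² of the full (semi-infinite) problem satisfies ‖w_{M4}‖² ≤ ‖w*‖² ≤ ‖w_{M4}‖²/(1−δ)². -/
open scoped RealInnerProductSpace

/-- M4 objective bracketing: if `wM` is the minimum-norm solution for a finite subset `T`
of the constraints, `ws` the minimum-norm solution of the full problem, and on termination
every constraint is satisfied with margin at least `1 - δ`, then
`‖wM‖² ≤ ‖ws‖² ≤ ‖wM‖²/(1-δ)²`. -/
theorem m4_objective_bracket {N : ℕ} {ι : Type*}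
    (x : ι → EuclideanSpace ℝ (Fin N)) (y : ι → ℝ)
    (hy : ∀ i, y i = 1 ∨ y i = -1)
    (T : Set ι) (hT : T.Finite)
    (δ : ℝ) (hδ0 : 0 < δ) (hδ1 : δ < 1)
    (wM ws : EuclideanSpace ℝ (Fin N))
    (hwM_feas : ∀ i ∈ T, 1 ≤ y i * ⟪wM, x i⟫)
    (hwM_min : ∀ v : EuclideanSpace ℝ (Fin N), (∀ i ∈ T, 1 ≤ y i * ⟪v, x i⟫) → ‖wM‖ ≤ ‖v‖)
    (hws_feas : ∀ i, 1 ≤ y i * ⟪ws, x i⟫)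
    (hws_min : ∀ v : EuclideanSpace ℝ (Fin N), (∀ i, 1 ≤ y i * ⟪v, x i⟫) → ‖ws‖ ≤ ‖v‖)
    (hterm : ∀ i, 1 - δ ≤ y i * ⟪wM, x i⟫) :
    ‖wM‖ ^ 2 ≤ ‖ws‖ ^ 2 ∧ ‖ws‖ ^ 2 ≤ ‖wM‖ ^ 2 / (1 - δ) ^ 2 := by
  have h1δ : 0 < 1 - δ := by linarith
  constructor
  · have h1 : ‖wM‖ ≤ ‖ws‖ := hwM_min ws (fun i _ => hws_feas i)
    exact pow_le_pow_left₀ (norm_nonneg _) h1 2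
  · have hfeas : ∀ i, 1 ≤ y i * ⟪(1 / (1 - δ)) • wM, x i⟫ := by
      intro i
      rw [inner_smul_left]
      have := hterm i
      have h : y i * ((1 / (1 - δ)) * ⟪wM, x i⟫) = (1 / (1 - δ)) * (y i * ⟪wM, x i⟫) := by ring
      simp only [RCLike.star_def, starRingEnd_apply, star_trivial]
      rw [h]
      calc (1:ℝ) = (1/(1-δ)) * (1-δ) := by field_simp
        _ ≤ (1/(1-δ)) * (y i * ⟪wM, x i⟫) := by
            apply mul_le_mul_of_nonneg_left (hterm i)
            positivity
    have h2 : ‖ws‖ ≤ ‖(1 / (1 - δ)) • wM‖ := hws_min _ hfeas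
    have h3 : ‖(1 / (1 - δ)) • wM‖ = ‖wM‖ / (1 - δ) := by
      rw [norm_smul, Real.norm_eq_abs, abs_of_pos (by positivity)]
      ring
    rw [h3] at h2
    have := pow_le_pow_left₀ (norm_nonneg ws) h2 2
    calc ‖ws‖^2 ≤ (‖wM‖/(1-δ))^2 := this
      _ = ‖wM‖^2 / (1-δ)^2 := by rw [div_pow]
end
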